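/- arXiv:quant-ph/0603278 — 5 statements merged into one kernel-verified Lean document; each statement's English description precedes it below -/
import Mathlib

section
/- For every real number δ with -1/2 ≤ δ ≤ 1/2, the binary entropy satisfies H(1/2 + δ) ≤ √(1 - 4δ²), where H(p) = -p·log₂ p - (1-p)·log₂(1-p) (with the convention 0·log₂ 0 = 0). -/
/-!
With `p = 1/2 + δ` the bound reads `H(p) ≤ 2 √(p (1 - p))`. Everything rests on `t ≤ sinh t` for
`t ≥ 0`, i.e. `log y ≤ (y - y⁻¹) / 2` for `y ≥ 1`, which gives `-x log x ≤ (1 - x²) / 2` and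
`-x log x ≤ √x (1 - x)` on `[0, 1]`. Away from the centre (`|δ| ≥ 1/4`) the second bound gives
`H(p) log 2 ≤ √(p q) (√p + √q)` with `q = 1 - p`, and `√p + √q ≤ 2 log 2` there. Near the centre
the first bound together with `log (1 + x) ≥ 2x / (x + 2)` gives the quadratic decay
`H(1/2 + δ) log 2 ≤ log 2 - δ² - δ² / (1 + δ)`, which beats `log 2 · √(1 - 4δ²)` for `δ ≤ 1/4`.
-/

/-- Binary entropy in bits, with the convention `0 * logb 2 0 = 0`. -/
noncomputable def binH (p : ℝ) : ℝ := -(p * Real.logb 2 p) - (1 - p) * Real.logb 2 (1 - p)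

open Real

namespace Real

lemma log_le_sub_inv_div_two {y : ℝ} (hy : 1 ≤ y) : log y ≤ (y - y⁻¹) / 2 := by
  rw [← sinh_log (by linarith)]
  exact self_le_sinh_iff.2 (log_nonneg hy)

lemma negMulLog_le_one_sub_sq_div_two {x : ℝ} (hx₀ : 0 ≤ x) (hx₁ : x ≤ 1) :
    negMulLog x ≤ (1 - x ^ 2) / 2 := by
  rcases hx₀.eq_or_lt with rfl | hx₀
  · norm_num
  have hlog := log_le_sub_inv_div_two (one_le_inv₀ hx₀ |>.2 hx₁)
  rw [log_inv] at hlog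
  have hmul := mul_le_mul_of_nonneg_left hlog hx₀.le
  rw [negMulLog]
  field_simp at hmul ⊢
  nlinarith

lemma negMulLog_le_sqrt_mul_one_sub {x : ℝ} (hx₀ : 0 ≤ x) (hx₁ : x ≤ 1) :
    negMulLog x ≤ √x * (1 - x) := by
  have hs : negMulLog x = 2 * √x * negMulLog √x := by
    conv_lhs => rw [← mul_self_sqrt hx₀]
    rw [negMulLog_mul]; ring
  rw [hs, mul_assoc]
  have hsqrt := negMulLog_le_one_sub_sq_div_two (sqrt_nonneg x) (sqrt_le_one.2 hx₁)
  rw [sq_sqrt hx₀] at hsqrt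
  nlinarith [sqrt_nonneg x]

lemma negMulLog_one_add_le {t : ℝ} (ht : 0 ≤ t) :
    negMulLog (1 + t) ≤ -(2 * t * (1 + t) / (t + 2)) := by
  rw [negMulLog, neg_mul, neg_le_neg_iff, mul_comm, mul_div_assoc]
  exact mul_le_mul_of_nonneg_left (le_log_one_add_of_nonneg ht) (by linarith)

lemma binEntropy_le_sqrt_mul_sqrt_add_sqrt {p : ℝ} (hp₀ : 0 ≤ p) (hp₁ : p ≤ 1) :
    binEntropy p ≤ √(p * (1 - p)) * (√p + √(1 - p)) := by
  have hq₀ : 0 ≤ 1 - p := by linarith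
  calc binEntropy p = negMulLog p + negMulLog (1 - p) :=
        binEntropy_eq_negMulLog_add_negMulLog_one_sub p
    _ ≤ √p * (1 - p) + √(1 - p) * (1 - (1 - p)) := by
        gcongr
        exacts [negMulLog_le_sqrt_mul_one_sub hp₀ hp₁,
          negMulLog_le_sqrt_mul_one_sub hq₀ (by linarith)]
    _ = √(p * (1 - p)) * (√p + √(1 - p)) := by
        have hp := mul_self_sqrt hp₀
        have hq := mul_self_sqrt hq₀
        rw [sqrt_mul hp₀]
        linear_combination -√p * hq - √(1 - p) * hp

lemma binEntropy_half_add_le {δ : ℝ} (h₀ : 0 ≤ δ) (h₁ : δ ≤ 1 / 2) :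
    binEntropy (1 / 2 + δ) ≤ log 2 - δ ^ 2 - δ ^ 2 / (1 + δ) := by
  have hsplit (x : ℝ) : negMulLog (x / 2) = (x * log 2 + negMulLog x) / 2 := by
    rw [div_eq_mul_inv, negMulLog_mul]; simp only [negMulLog, log_inv]; ring
  have hp : 1 / 2 + δ = (1 + 2 * δ) / 2 := by ring
  have hq : 1 - (1 / 2 + δ) = (1 - 2 * δ) / 2 := by ring
  rw [binEntropy_eq_negMulLog_add_negMulLog_one_sub, hq, hp, hsplit, hsplit]
  have h_add := negMulLog_one_add_le (t := 2 * δ) (by linarith)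
  have h_sub := negMulLog_le_one_sub_sq_div_two (x := 1 - 2 * δ) (by linarith) (by linarith)
  have h_frac : 2 * (2 * δ) * (1 + 2 * δ) / (2 * δ + 2) = 2 * δ + 2 * δ ^ 2 / (1 + δ) := by
    field_simp; ring
  rw [h_frac] at h_add
  linear_combination (h_add + h_sub) / 2

lemma binEntropy_half_add_le_of_le_quarter {δ : ℝ} (h₀ : 0 ≤ δ) (h₁ : δ ≤ 1 / 4) :
    binEntropy (1 / 2 + δ) ≤ log 2 * √(1 - 4 * δ ^ 2) := by
  have hsqrt : 1 - 9 / 4 * δ ^ 2 ≤ √(1 - 4 * δ ^ 2) := by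
    rw [le_sqrt (by nlinarith) (by nlinarith)]
    have hδ2 : δ ^ 2 ≤ 1 / 16 := by nlinarith
    nlinarith [mul_nonneg (sq_nonneg δ) (sub_nonneg.2 hδ2)]
  have hfrac : 4 / 5 * δ ^ 2 ≤ δ ^ 2 / (1 + δ) := by
    rw [le_div_iff₀ (by linarith)]
    nlinarith [sq_nonneg δ]
  calc binEntropy (1 / 2 + δ) ≤ log 2 - δ ^ 2 - δ ^ 2 / (1 + δ) :=
        binEntropy_half_add_le h₀ (by linarith)
    _ ≤ log 2 * (1 - 9 / 4 * δ ^ 2) := by nlinarith [log_two_lt_d9, sq_nonneg δ]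
    _ ≤ log 2 * √(1 - 4 * δ ^ 2) := by gcongr

lemma binEntropy_half_add_le_of_quarter_le {δ : ℝ} (h₀ : 1 / 4 ≤ δ) (h₁ : δ ≤ 1 / 2) :
    binEntropy (1 / 2 + δ) ≤ log 2 * √(1 - 4 * δ ^ 2) := by
  set p := 1 / 2 + δ with hp
  have hp₀ : 0 ≤ p := by linarith
  have hq₀ : 0 ≤ 1 - p := by linarith
  have hpq : √(p * (1 - p)) = √(1 - 4 * δ ^ 2) / 2 := by
    rw [show p * (1 - p) = (1 - 4 * δ ^ 2) / 2 ^ 2 by ring, sqrt_div' _ (by positivity),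
      sqrt_sq zero_le_two]
  have hsum : √p + √(1 - p) ≤ 2 * log 2 := by
    have hsq : (√p + √(1 - p)) ^ 2 = 1 + √(1 - 4 * δ ^ 2) := by
      rw [add_sq, sq_sqrt hp₀, sq_sqrt hq₀, mul_assoc, ← sqrt_mul hp₀, hpq]; ring
    have h_le : √(1 - 4 * δ ^ 2) ≤ 9 / 10 := by
      rw [sqrt_le_left (by norm_num)]; nlinarith
    nlinarith [log_two_gt_d9, sqrt_nonneg p, sqrt_nonneg (1 - p)]
  calc binEntropy p ≤ √(p * (1 - p)) * (√p + √(1 - p)) :=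
        binEntropy_le_sqrt_mul_sqrt_add_sqrt hp₀ (by linarith)
    _ ≤ √(p * (1 - p)) * (2 * log 2) := by gcongr
    _ = log 2 * √(1 - 4 * δ ^ 2) := by rw [hpq]; ring

end Real

lemma binH_eq_binEntropy_div_log_two (p : ℝ) : binH p = binEntropy p / log 2 := by
  simp only [binH, logb, binEntropy_eq_negMulLog_add_negMulLog_one_sub, negMulLog]
  ring

theorem binH_le_sqrt (δ : ℝ) (h1 : -(1/2) ≤ δ) (h2 : δ ≤ 1/2) :
    binH (1/2 + δ) ≤ Real.sqrt (1 - 4 * δ^2) := by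
  rw [binH_eq_binEntropy_div_log_two, div_le_iff₀ (log_pos one_lt_two), mul_comm]
  wlog hδ : 0 ≤ δ generalizing δ
  · have := this (-δ) (by linarith) (by linarith) (by linarith)
    rwa [neg_sq, ← binEntropy_one_sub, show 1 - (1 / 2 + -δ) = 1 / 2 + δ by ring] at this
  rcases le_total δ (1 / 4) with h | h
  · exact binEntropy_half_add_le_of_le_quarter hδ h
  · exact binEntropy_half_add_le_of_quarter_le h h2
end

section
/- Let ρ₀, ρ₁ be commuting density matrices of the same finite dimension, let p ∈ [0,1], and set ρ = p·ρ₀ + (1-p)·ρ₁. Then p·B(ρ₀,ρ) + (1-p)·B(ρ₁,ρ) ≤ √(p² + (1-p)² + 2p(1-p)·B(ρ₀,ρ₁)), where B(σ,τ) = Tr|√σ·√τ| is the fidelity. -/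
open scoped ComplexOrder

/-- The square root of a positive semidefinite matrix, as in the older Mathlib. -/
noncomputable def Matrix.PosSemidef.sqrt {n : Type*} [Fintype n] [DecidableEq n] {𝕜 : Type*} [RCLike 𝕜]
    {A : Matrix n n 𝕜} (hA : A.PosSemidef) : Matrix n n 𝕜 :=
  hA.1.eigenvectorUnitary.1 * Matrix.diagonal ((↑) ∘ (√·) ∘ hA.1.eigenvalues) *
    (star hA.1.eigenvectorUnitary : Matrix n n 𝕜)

/-- The trace norm of a complex matrix: `Tr √(Mᴴ M)`. -/
noncomputable def traceNorm {n : ℕ} (M : Matrix (Fin n) (Fin n) ℂ) : ℝ :=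
  ((Matrix.posSemidef_conjTranspose_mul_self M).sqrt.trace).re

/-!
Since `ρ₀`, `ρ₁` and `ρ = p ρ₀ + (1 - p) ρ₁` commute, so do their square roots, and a product of
two commuting positive semidefinite matrices is positive semidefinite; hence every fidelity in the
statement is a plain trace `Re Tr (√σ √τ)`. With `A = p √ρ₀ + (1 - p) √ρ₁` the left-hand side is
`Re Tr (A √ρ)`, and the Cauchy–Schwarz inequality for the Hilbert–Schmidt inner product bounds it
by `‖A‖₂ ‖√ρ‖₂`, where `‖√ρ‖₂² = Tr ρ = 1` and `‖A‖₂²` is the expression under the square root.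
-/

open scoped MatrixOrder

protected lemma Commute.cfcSqrt_cfcSqrt {A : Type*} [Ring A] [StarRing A] [Algebra ℝ A]
    [TopologicalSpace A] [IsTopologicalRing A] [T2Space A] [PartialOrder A] [StarOrderedRing A]
    [ContinuousFunctionalCalculus ℝ A IsSelfAdjoint] [NonnegSpectrumClass ℝ A] {a b : A}
    (h : Commute a b) :
    Commute (CFC.sqrt a) (CFC.sqrt b) := by
  rw [CFC.sqrt_eq_cfc, CFC.sqrt_eq_cfc]
  exact ((h.cfc_nnreal _).symm.cfc_nnreal _).symm

namespace Matrix

variable {n 𝕜 : Type*} [Fintype n] [DecidableEq n] [RCLike 𝕜]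

lemma PosSemidef.sqrt_eq_cfcSqrt {A : Matrix n n 𝕜} (hA : A.PosSemidef) :
    hA.sqrt = CFC.sqrt A := by
  rw [CFC.sqrt_eq_cfc, cfc_nnreal_eq_real _ A, hA.1.cfc_eq]
  simp only [IsHermitian.cfc, Unitary.conjStarAlgAut_apply, PosSemidef.sqrt]
  congr 3
  funext i
  simp [Real.coe_sqrt, Real.coe_toNNReal', max_eq_left (hA.eigenvalues_nonneg i)]

lemma re_trace_mul_conjTranspose_le (A B : Matrix n n 𝕜) :
    RCLike.re (A * Bᴴ).trace ≤
      √(RCLike.re (A * Aᴴ).trace) * √(RCLike.re (B * Bᴴ).trace) := by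
  let := toMatrixSeminormedAddCommGroup (1 : Matrix n n 𝕜) PosSemidef.one
  let := toMatrixInnerProductSpace (1 : Matrix n n 𝕜) PosSemidef.one
  have hnorm (X : Matrix n n 𝕜) : ‖X‖ = √(RCLike.re (X * Xᴴ).trace) := by
    rw [← Real.sqrt_sq (norm_nonneg X), ← inner_self_eq_norm_sq (𝕜 := 𝕜)]
    change √(RCLike.re (X * 1 * Xᴴ).trace) = _
    rw [Matrix.mul_one]
  have hcs := re_inner_le_norm (𝕜 := 𝕜) B A
  change RCLike.re (A * 1 * Bᴴ).trace ≤ _ at hcs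
  rwa [Matrix.mul_one, hnorm, hnorm, mul_comm] at hcs

end Matrix

open Matrix

lemma traceNorm_of_nonneg {n : ℕ} {M : Matrix (Fin n) (Fin n) ℂ} (hM : 0 ≤ M) :
    traceNorm M = M.trace.re := by
  rw [traceNorm, PosSemidef.sqrt_eq_cfcSqrt, ← star_eq_conjTranspose, hM.isSelfAdjoint.star_eq,
    CFC.sqrt_mul_self M]

lemma traceNorm_sqrt_mul_sqrt_of_commute {n : ℕ} {A B : Matrix (Fin n) (Fin n) ℂ}
    (hA : A.PosSemidef) (hB : B.PosSemidef) (h : Commute A B) :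
    traceNorm (hA.sqrt * hB.sqrt) = (CFC.sqrt A * CFC.sqrt B).trace.re := by
  rw [hA.sqrt_eq_cfcSqrt, hB.sqrt_eq_cfcSqrt]
  exact traceNorm_of_nonneg (h.cfcSqrt_cfcSqrt.mul_nonneg (CFC.sqrt_nonneg A) (CFC.sqrt_nonneg B))

theorem fidelity_avg_bound_commuting_general {n : ℕ} (ρ0 ρ1 : Matrix (Fin n) (Fin n) ℂ)
    (h0 : ρ0.PosSemidef) (h1 : ρ1.PosSemidef)
    (h0t : ρ0.trace = 1) (h1t : ρ1.trace = 1)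
    (hcomm : ρ0 * ρ1 = ρ1 * ρ0)
    (p : ℝ)
    (hρ : ((p : ℂ) • ρ0 + ((1 - p : ℝ) : ℂ) • ρ1).PosSemidef) :
    p * traceNorm (h0.sqrt * hρ.sqrt) + (1 - p) * traceNorm (h1.sqrt * hρ.sqrt) ≤
      Real.sqrt (p^2 + (1-p)^2 + 2*p*(1-p) * traceNorm (h0.sqrt * h1.sqrt)) := by
  have hcomm : Commute ρ0 ρ1 := hcomm
  set ρ := (p : ℂ) • ρ0 + ((1 - p : ℝ) : ℂ) • ρ1
  have hcomm0 : Commute ρ0 ρ := ((Commute.refl ρ0).smul_right _).add_right (hcomm.smul_right _)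
  have hcomm1 : Commute ρ1 ρ :=
    (hcomm.symm.smul_right _).add_right ((Commute.refl ρ1).smul_right _)
  rw [traceNorm_sqrt_mul_sqrt_of_commute h0 hρ hcomm0,
    traceNorm_sqrt_mul_sqrt_of_commute h1 hρ hcomm1, traceNorm_sqrt_mul_sqrt_of_commute h0 h1 hcomm]
  set A := p • CFC.sqrt ρ0 + (1 - p) • CFC.sqrt ρ1
  have hA : Aᴴ = A :=
    (((IsSelfAdjoint.all p).smul (CFC.sqrt_nonneg ρ0).isSelfAdjoint).add
      ((IsSelfAdjoint.all (1 - p)).smul (CFC.sqrt_nonneg ρ1).isSelfAdjoint)).star_eq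
  have hS : (CFC.sqrt ρ)ᴴ = CFC.sqrt ρ := (CFC.sqrt_nonneg ρ).isSelfAdjoint.star_eq
  have hAA : (A * A).trace.re =
      p^2 + (1-p)^2 + 2*p*(1-p) * (CFC.sqrt ρ0 * CFC.sqrt ρ1).trace.re := by
    simp only [A, add_mul, mul_add, smul_mul_assoc, mul_smul_comm, hcomm.cfcSqrt_cfcSqrt.symm.eq,
      CFC.sqrt_mul_sqrt_self ρ0 h0.nonneg, CFC.sqrt_mul_sqrt_self ρ1 h1.nonneg, trace_add,
      trace_smul, h0t, h1t, Complex.add_re, Complex.smul_re, Complex.one_re, smul_eq_mul]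
    ring
  have hSS : (CFC.sqrt ρ * CFC.sqrt ρ).trace.re = 1 := by
    rw [CFC.sqrt_mul_sqrt_self ρ hρ.nonneg]
    simp [ρ, h0t, h1t]
  calc p * (CFC.sqrt ρ0 * CFC.sqrt ρ).trace.re + (1 - p) * (CFC.sqrt ρ1 * CFC.sqrt ρ).trace.re
      = (A * (CFC.sqrt ρ)ᴴ).trace.re := by simp [hS, A, add_mul, trace_add, trace_smul]
    _ ≤ √(A * Aᴴ).trace.re * √(CFC.sqrt ρ * (CFC.sqrt ρ)ᴴ).trace.re :=
      re_trace_mul_conjTranspose_le A (CFC.sqrt ρ)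
    _ = √(p^2 + (1-p)^2 + 2*p*(1-p) * (CFC.sqrt ρ0 * CFC.sqrt ρ1).trace.re) := by
      rw [hA, hS, hAA, hSS, Real.sqrt_one, mul_one]

theorem fidelity_avg_bound_commuting {n : ℕ} (ρ0 ρ1 : Matrix (Fin n) (Fin n) ℂ)
    (h0 : ρ0.PosSemidef) (h1 : ρ1.PosSemidef)
    (h0t : ρ0.trace = 1) (h1t : ρ1.trace = 1)
    (hcomm : ρ0 * ρ1 = ρ1 * ρ0)
    (p : ℝ) (hp : p ∈ Set.Icc (0:ℝ) 1)
    (hρ : ((p : ℂ) • ρ0 + ((1 - p : ℝ) : ℂ) • ρ1).PosSemidef) :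
    p * traceNorm (h0.sqrt * hρ.sqrt) + (1 - p) * traceNorm (h1.sqrt * hρ.sqrt) ≤
      Real.sqrt (p^2 + (1-p)^2 + 2*p*(1-p) * traceNorm (h0.sqrt * h1.sqrt)) :=
  fidelity_avg_bound_commuting_general ρ0 ρ1 h0 h1 h0t h1t hcomm p hρ
end

section
/- Let |φ₀⟩, |φ₁⟩ be unit vectors in a finite-dimensional complex Hilbert space with |⟨φ₀|φ₁⟩| = cos θ, p ∈ [0,1], and ρ = p·|φ₀⟩⟨φ₀| + (1-p)·|φ₁⟩⟨φ₁|. Then the von Neumann entropy of ρ (in bits) satisfies S(ρ) ≤ 2·√(p(1-p))·sin θ = 2·√(p(1-p)·(1 - |⟨φ₀|φ₁⟩|²)). -/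
/-!
The matrix `ρ = p |φ₀⟩⟨φ₀| + (1 - p) |φ₁⟩⟨φ₁|` equals `M Mᴴ`, where `M` has the two columns
`√p φ₀` and `√(1-p) φ₁`; so it is positive semidefinite of rank at most two and trace one, and its
nonzero eigenvalues are among `x, 1 - x` for some `x ∈ [0, 1]`. Comparing
`tr ρ² = p² + (1-p)² + 2p(1-p) cos² θ` with `x² + (1-x)²` gives `x (1 - x) = p (1-p) sin² θ`, so
the claim is the binary entropy bound `h(x) ≤ 2 log 2 · √(x (1 - x))` (in nats).

For that bound, the gap `g = 2 log 2 · √(x (1 - x)) - h` has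
`g'' = (2 √(x (1 - x)) - log 2) / (2 (x (1 - x))^{3/2})`. Between the two roots of
`4 x (1 - x) = (log 2)²` it is convex, so `g x = (g x + g (1 - x)) / 2 ≥ g (1/2) = 0`. Outside
them it is concave, so it stays above the smaller of its values at `0` (or `1`), which is `0`, and
at the adjacent root, which is nonnegative by the previous case.
-/

open Real Set Matrix
open scoped ComplexOrder InnerProductSpace ComplexConjugate

noncomputable def entropyGap (x : ℝ) : ℝ :=
  2 * log 2 * √(x * (1 - x)) - binEntropy x

lemma entropyGap_one_sub (x : ℝ) : entropyGap (1 - x) = entropyGap x := by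
  simp only [entropyGap, binEntropy_one_sub, sub_sub_cancel, mul_comm (1 - x)]

lemma entropyGap_zero : entropyGap 0 = 0 := by simp [entropyGap]

lemma entropyGap_two_inv : entropyGap 2⁻¹ = 0 := by
  have : √((2:ℝ)⁻¹ * (1 - 2⁻¹)) = 2⁻¹ := by
    rw [show (2:ℝ)⁻¹ * (1 - 2⁻¹) = 2⁻¹ ^ 2 by norm_num, sqrt_sq (by norm_num)]
  rw [entropyGap, binEntropy_two_inv, this]
  ring

lemma continuous_entropyGap : Continuous entropyGap := by
  unfold entropyGap; fun_prop

lemma hasDerivAt_sqrt_mul_one_sub {x : ℝ} (hx₀ : 0 < x) (hx₁ : x < 1) :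
    HasDerivAt (fun y => √(y * (1 - y))) ((1 - 2 * x) / (2 * √(x * (1 - x)))) x :=
  (((hasDerivAt_id x).mul ((hasDerivAt_id x).const_sub 1)).congr_deriv (by simp; ring)).sqrt
    (mul_pos hx₀ (sub_pos.2 hx₁)).ne'

lemma hasDerivAt_entropyGap {x : ℝ} (hx₀ : 0 < x) (hx₁ : x < 1) :
    HasDerivAt entropyGap (log 2 * (1 - 2 * x) / √(x * (1 - x)) + log x - log (1 - x)) x := by
  have hsqrt := hasDerivAt_sqrt_mul_one_sub hx₀ hx₁
  refine ((hsqrt.const_mul (2 * log 2)).sub (hasDerivAt_binEntropy hx₀.ne' hx₁.ne)).congr_deriv ?_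
  field_simp
  ring

lemma hasDerivAt_entropyGap_deriv {x : ℝ} (hx₀ : 0 < x) (hx₁ : x < 1) :
    HasDerivAt (fun y => log 2 * (1 - 2 * y) / √(y * (1 - y)) + log y - log (1 - y))
      ((2 * √(x * (1 - x)) - log 2) / (2 * (x * (1 - x)) * √(x * (1 - x)))) x := by
  have hu : 0 < x * (1 - x) := mul_pos hx₀ (sub_pos.2 hx₁)
  have hs : 0 < √(x * (1 - x)) := sqrt_pos.2 hu
  have hsqrt := hasDerivAt_sqrt_mul_one_sub hx₀ hx₁
  have hlin : HasDerivAt (fun y => log 2 * (1 - 2 * y)) (log 2 * (-2)) x :=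
    (((hasDerivAt_id x).const_mul 2).const_sub 1).const_mul (log 2) |>.congr_deriv (by simp)
  have hlog₁ : HasDerivAt (fun y => log (1 - y)) (-1 / (1 - x)) x := by
    simpa using ((hasDerivAt_id' x).const_sub 1).log (sub_pos.2 hx₁).ne'
  refine (((hlin.div hsqrt hs.ne').add (hasDerivAt_log hx₀.ne')).sub hlog₁).congr_deriv ?_
  have hsq : √(x * (1 - x)) ^ 2 = x * (1 - x) := sq_sqrt hu.le
  have h1 : (1 - x) ≠ 0 := by linarith
  field_simp
  linear_combination log 2 * (1 - 2 * x) ^ 2 * hsq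

-- the root in `[0, 1/2]` of `4 x (1 - x) = (log 2)²`, where `entropyGap''` changes sign
noncomputable def entropyGapInflection : ℝ := (1 - √(1 - log 2 ^ 2)) / 2

lemma log_two_sq_le_one : log 2 ^ 2 ≤ 1 := by
  have := log_two_lt_d9
  have := log_pos one_lt_two
  nlinarith

lemma entropyGapInflection_nonneg : 0 ≤ entropyGapInflection := by
  have : √(1 - log 2 ^ 2) ≤ 1 := sqrt_le_one.2 (by linarith [sq_nonneg (log 2)])
  unfold entropyGapInflection; linarith

lemma entropyGapInflection_le_half : entropyGapInflection ≤ 2⁻¹ := by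
  have := sqrt_nonneg (1 - log 2 ^ 2)
  unfold entropyGapInflection; linarith

lemma two_mul_sqrt_entropyGapInflection :
    2 * √(entropyGapInflection * (1 - entropyGapInflection)) = log 2 := by
  have h : entropyGapInflection * (1 - entropyGapInflection) = (log 2 / 2) ^ 2 := by
    have := sq_sqrt (sub_nonneg.2 log_two_sq_le_one)
    unfold entropyGapInflection; linear_combination -this / 4
  rw [h, sqrt_sq (by positivity)]
  ring

lemma entropyGap_concaveOn : ConcaveOn ℝ (Icc 0 entropyGapInflection) entropyGap := by
  have ha := entropyGapInflection_le_half
  have hD : interior (Icc 0 entropyGapInflection) ⊆ Ioo 0 1 := by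
    rw [interior_Icc]; exact Ioo_subset_Ioo le_rfl (by linarith)
  refine concaveOn_of_hasDerivWithinAt2_nonpos (convex_Icc _ _) continuous_entropyGap.continuousOn
    (fun x hx ↦ (hasDerivAt_entropyGap (hD hx).1 (hD hx).2).hasDerivWithinAt)
    (fun x hx ↦ (hasDerivAt_entropyGap_deriv (hD hx).1 (hD hx).2).hasDerivWithinAt)
    (fun x hx ↦ ?_)
  rw [interior_Icc] at hx
  have hu : 0 < x * (1 - x) := mul_pos hx.1 (by linarith [hx.2])
  have : √(x * (1 - x)) ≤ √(entropyGapInflection * (1 - entropyGapInflection)) :=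
    sqrt_le_sqrt (by nlinarith [hx.1, hx.2])
  have := two_mul_sqrt_entropyGapInflection
  exact div_nonpos_of_nonpos_of_nonneg (by linarith) (by positivity)

lemma entropyGap_convexOn :
    ConvexOn ℝ (Icc entropyGapInflection (1 - entropyGapInflection)) entropyGap := by
  have ha := entropyGapInflection_nonneg
  have hD : interior (Icc entropyGapInflection (1 - entropyGapInflection)) ⊆ Ioo 0 1 := by
    rw [interior_Icc]; exact Ioo_subset_Ioo ha (by linarith)
  refine convexOn_of_hasDerivWithinAt2_nonneg (convex_Icc _ _) continuous_entropyGap.continuousOn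
    (fun x hx ↦ (hasDerivAt_entropyGap (hD hx).1 (hD hx).2).hasDerivWithinAt)
    (fun x hx ↦ (hasDerivAt_entropyGap_deriv (hD hx).1 (hD hx).2).hasDerivWithinAt)
    (fun x hx ↦ ?_)
  have hu : 0 < x * (1 - x) := mul_pos (hD hx).1 (by linarith [(hD hx).2])
  rw [interior_Icc] at hx
  have : √(entropyGapInflection * (1 - entropyGapInflection)) ≤ √(x * (1 - x)) :=
    sqrt_le_sqrt (by nlinarith [hx.1, hx.2])
  have := two_mul_sqrt_entropyGapInflection
  exact div_nonneg (by linarith) (by positivity)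

lemma entropyGap_nonneg_of_mem_Icc_inflection {x : ℝ}
    (hx : x ∈ Icc entropyGapInflection (1 - entropyGapInflection)) : 0 ≤ entropyGap x := by
  have hx' : 1 - x ∈ Icc entropyGapInflection (1 - entropyGapInflection) :=
    ⟨by linarith [hx.2], by linarith [hx.1]⟩
  have := entropyGap_convexOn.2 hx hx' (by norm_num : (0:ℝ) ≤ 2⁻¹) (by norm_num : (0:ℝ) ≤ 2⁻¹)
    (by norm_num)
  simp only [smul_eq_mul, entropyGap_one_sub] at this
  rw [show 2⁻¹ * x + 2⁻¹ * (1 - x) = (2⁻¹ : ℝ) by ring, entropyGap_two_inv] at this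
  linarith

lemma entropyGap_nonneg {x : ℝ} (hx : x ∈ Icc 0 1) : 0 ≤ entropyGap x := by
  wlog hx₂ : x ≤ 2⁻¹ generalizing x
  · rw [← entropyGap_one_sub]
    exact this ⟨by linarith [hx.2], by linarith [hx.1]⟩ (by linarith)
  have ha₀ := entropyGapInflection_nonneg
  have ha₁ := entropyGapInflection_le_half
  rcases le_total x entropyGapInflection with h | h
  · have hmid := entropyGap_nonneg_of_mem_Icc_inflection ⟨le_rfl, by linarith⟩
    have := entropyGap_concaveOn.min_le_of_mem_Icc (left_mem_Icc.2 ha₀) (right_mem_Icc.2 ha₀)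
      ⟨hx.1, h⟩
    rw [entropyGap_zero, min_eq_left hmid] at this
    exact this
  · exact entropyGap_nonneg_of_mem_Icc_inflection ⟨h, by linarith⟩

lemma binEntropy_le_two_mul_log_two_mul_sqrt {x : ℝ} (hx : x ∈ Icc 0 1) :
    binEntropy x ≤ 2 * log 2 * √(x * (1 - x)) :=
  sub_nonneg.1 (entropyGap_nonneg hx)

lemma Matrix.IsHermitian.trace_mul_self {𝕜 n : Type*} [RCLike 𝕜] [Fintype n] [DecidableEq n]
    {A : Matrix n n 𝕜} (hA : A.IsHermitian) : (A * A).trace = ∑ i, (hA.eigenvalues i : 𝕜) ^ 2 := by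
  conv_lhs => rw [hA.spectral_theorem, ← map_mul, Unitary.conjStarAlgAut_apply, trace_mul_cycle,
    Unitary.coe_star_mul_self, one_mul, diagonal_mul_diagonal, trace_diagonal]
  simp [sq]

open Finset in
lemma exists_sum_comp_eq_of_card_support_le_two {ι : Type*} [Fintype ι] {w : ι → ℝ}
    (hw : ∀ i, 0 ≤ w i) (hsum : ∑ i, w i = 1) (hcard : #{i | w i ≠ 0} ≤ 2) :
    ∃ x ∈ Set.Icc (0 : ℝ) 1, ∀ f : ℝ → ℝ, f 0 = 0 → ∑ i, f (w i) = f x + f (1 - x) := by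
  classical
  have hsupp (f : ℝ → ℝ) (hf : f 0 = 0) : ∑ i, f (w i) = ∑ i with w i ≠ 0, f (w i) :=
    (sum_filter_of_ne fun i _ hfi ↦ by contrapose! hfi; rw [hfi, hf]).symm
  rw [hsupp (fun t ↦ t) rfl] at hsum
  interval_cases hc : #{i | w i ≠ 0}
  · simp_all [card_eq_zero]
  · obtain ⟨i, hi⟩ := card_eq_one.1 hc
    refine ⟨1, right_mem_Icc.2 zero_le_one, fun f hf ↦ ?_⟩
    simp_all
  · obtain ⟨i, j, hij, hs⟩ := card_eq_two.1 hc
    rw [hs, sum_pair hij] at hsum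
    refine ⟨w i, ⟨hw i, by linarith [hw j]⟩, fun f hf ↦ ?_⟩
    rw [hsupp f hf, hs, sum_pair hij, show w j = 1 - w i by linarith]

lemma neg_mul_logb_add_neg_mul_logb_one_sub (x : ℝ) :
    -(x * logb 2 x) + -((1 - x) * logb 2 (1 - x)) = binEntropy x / log 2 := by
  rw [binEntropy, log_inv, log_inv, logb, logb]
  ring

open Finset in
lemma Matrix.PosSemidef.sum_neg_mul_logb_eigenvalues_le {𝕜 n : Type*} [RCLike 𝕜] [Fintype n]
    [DecidableEq n] {ρ : Matrix n n 𝕜} (hρ : ρ.PosSemidef) (htr : ρ.trace = 1)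
    (hrank : ρ.rank ≤ 2) {c : ℝ} (htr₂ : (ρ * ρ).trace = c) :
    ∑ i, -(hρ.1.eigenvalues i * logb 2 (hρ.1.eigenvalues i)) ≤ 2 * √((1 - c) / 2) := by
  set w := hρ.1.eigenvalues
  have hsum : ∑ i, w i = 1 := by
    have := hρ.1.trace_eq_sum_eigenvalues
    rw [htr] at this
    exact_mod_cast this.symm
  have hsq : ∑ i, w i ^ 2 = c := by
    have := hρ.1.trace_mul_self
    rw [htr₂] at this
    exact_mod_cast this.symm
  have hcard : #{i | w i ≠ 0} ≤ 2 := by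
    rwa [hρ.1.rank_eq_card_non_zero_eigs, Fintype.card_subtype] at hrank
  obtain ⟨x, hx, hw⟩ := exists_sum_comp_eq_of_card_support_le_two hρ.eigenvalues_nonneg hsum hcard
  have hc : (1 - c) / 2 = x * (1 - x) := by
    rw [← hsq, hw (· ^ 2) (by simp)]
    ring
  rw [hw (fun t ↦ -(t * logb 2 t)) (by simp), neg_mul_logb_add_neg_mul_logb_one_sub, hc,
    div_le_iff₀ (log_pos one_lt_two)]
  linarith [binEntropy_le_two_mul_log_two_mul_sqrt hx]

section
variable {𝕜 n : Type*} [RCLike 𝕜] [Fintype n]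

lemma trace_vecMulVec_star (x : EuclideanSpace 𝕜 n) :
    (vecMulVec x.ofLp (star x.ofLp)).trace = (‖x‖ ^ 2 : ℝ) := by
  rw [trace_vecMulVec, ← EuclideanSpace.inner_eq_star_dotProduct, inner_self_eq_norm_sq_to_K]
  push_cast; rfl

lemma trace_vecMulVec_star_mul_vecMulVec_star (x y : EuclideanSpace 𝕜 n) :
    (vecMulVec x.ofLp (star x.ofLp) * vecMulVec y.ofLp (star y.ofLp)).trace =
      (‖⟪x, y⟫_𝕜‖ ^ 2 : ℝ) := by
  rw [vecMulVec_mul_vecMulVec, trace_vecMulVec, dotProduct_smul, dotProduct_comm (star x.ofLp),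
    ← EuclideanSpace.inner_eq_star_dotProduct, ← EuclideanSpace.inner_eq_star_dotProduct,
    ← inner_conj_symm, smul_eq_mul, RCLike.conj_mul, RCLike.norm_conj, norm_inner_symm]
  norm_cast

end

noncomputable def pureMixture {n : Type*} (s t : ℝ) (x y : EuclideanSpace ℂ n) : Matrix n n ℂ :=
  (s : ℂ) • vecMulVec x.ofLp (star x.ofLp) + (t : ℂ) • vecMulVec y.ofLp (star y.ofLp)

section
variable {n : Type*} {s t : ℝ} {x y : EuclideanSpace ℂ n}

lemma pureMixture_eq_mul_conjTranspose (hs : 0 ≤ s) (ht : 0 ≤ t) :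
    pureMixture s t x y = of (fun i k ↦ ![(√s : ℂ) * x i, (√t : ℂ) * y i] k) *
      (of (fun i k ↦ ![(√s : ℂ) * x i, (√t : ℂ) * y i] k))ᴴ := by
  have hs' : (√s : ℂ) * √s = s := by rw [← Complex.ofReal_mul, mul_self_sqrt hs]
  have ht' : (√t : ℂ) * √t = t := by rw [← Complex.ofReal_mul, mul_self_sqrt ht]
  ext i j
  simp [pureMixture, mul_apply, Fin.sum_univ_two, vecMulVec_apply]
  linear_combination -(x i * conj (x j)) * hs' - (y i * conj (y j)) * ht'

lemma posSemidef_pureMixture [Fintype n] (hs : 0 ≤ s) (ht : 0 ≤ t) :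
    (pureMixture s t x y).PosSemidef := by
  rw [pureMixture_eq_mul_conjTranspose hs ht]
  exact posSemidef_self_mul_conjTranspose _

lemma rank_pureMixture_le_two [Fintype n] (hs : 0 ≤ s) (ht : 0 ≤ t) :
    (pureMixture s t x y).rank ≤ 2 := by
  rw [pureMixture_eq_mul_conjTranspose hs ht, rank_self_mul_conjTranspose]
  exact (rank_le_card_width _).trans_eq (Fintype.card_fin 2)

variable [Fintype n] (hx : ‖x‖ = 1) (hy : ‖y‖ = 1)
include hx hy

lemma trace_pureMixture : (pureMixture s t x y).trace = (s + t : ℝ) := by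
  simp only [pureMixture, trace_add, trace_smul, trace_vecMulVec_star, hx, hy]
  push_cast; ring

lemma trace_pureMixture_mul_self :
    (pureMixture s t x y * pureMixture s t x y).trace =
      (s ^ 2 + t ^ 2 + 2 * s * t * ‖⟪x, y⟫_ℂ‖ ^ 2 : ℝ) := by
  simp only [pureMixture, add_mul, mul_add, smul_mul_smul, trace_add, trace_smul,
    trace_vecMulVec_star_mul_vecMulVec_star, inner_self_eq_norm_sq_to_K, norm_inner_symm y x,
    hx, hy]
  norm_num; ring

end

theorem vonNeumann_entropy_of_binary_pure_mixture_le
    {d : ℕ} (φ0 φ1 : EuclideanSpace ℂ (Fin d)) (h0 : ‖φ0‖ = 1) (h1 : ‖φ1‖ = 1)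
    (θ : ℝ) (hθ : θ ∈ Set.Icc 0 (Real.pi / 2))
    (hip : ‖⟪φ0, φ1⟫_ℂ‖ = Real.cos θ)
    (p : ℝ) (hp : p ∈ Set.Icc (0:ℝ) 1)
    (ρ : Matrix (Fin d) (Fin d) ℂ)
    (hρ : ρ = (p : ℂ) • Matrix.of (fun i j => φ0 i * (starRingEnd ℂ) (φ0 j)) +
              ((1 - p : ℝ) : ℂ) • Matrix.of (fun i j => φ1 i * (starRingEnd ℂ) (φ1 j)))
    (hherm : ρ.IsHermitian) :
    (∑ i, -(hherm.eigenvalues i * Real.logb 2 (hherm.eigenvalues i))) ≤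
      2 * Real.sqrt (p * (1-p)) * Real.sin θ := by
  obtain ⟨hp₀, hp₁⟩ := hp
  replace hp₁ : 0 ≤ 1 - p := sub_nonneg.2 hp₁
  have hmix : ρ = pureMixture p (1 - p) φ0 φ1 := hρ
  have hpsd : ρ.PosSemidef := hmix ▸ posSemidef_pureMixture hp₀ hp₁
  have hentropy := hpsd.sum_neg_mul_logb_eigenvalues_le
    (c := p ^ 2 + (1 - p) ^ 2 + 2 * p * (1 - p) * ‖⟪φ0, φ1⟫_ℂ‖ ^ 2)
    (by rw [hmix, trace_pureMixture h0 h1]; norm_num) (hmix ▸ rank_pureMixture_le_two hp₀ hp₁)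
    (by rw [hmix]; exact trace_pureMixture_mul_self h0 h1)
  have hsin : 0 ≤ sin θ := sin_nonneg_of_nonneg_of_le_pi hθ.1 (by linarith [hθ.2, pi_pos])
  have hgap : (1 - (p ^ 2 + (1 - p) ^ 2 + 2 * p * (1 - p) * ‖⟪φ0, φ1⟫_ℂ‖ ^ 2)) / 2 =
      (√(p * (1 - p)) * sin θ) ^ 2 := by
    rw [mul_pow, sq_sqrt (mul_nonneg hp₀ hp₁), hip, sin_sq]
    ring
  rwa [hgap, sqrt_sq (by positivity), ← mul_assoc] at hentropy
end

section
/- For a binary ensemble of pure states E = {(p, |φ₀⟩⟨φ₀|), (1-p, |φ₁⟩⟨φ₁|)}, the Holevo information χ(E) = S(p|φ₀⟩⟨φ₀| + (1-p)|φ₁⟩⟨φ₁|) satisfies χ(E) ≤ 2·√(p(1-p)·(1 - B²)), where B = |⟨φ₀|φ₁⟩| is the fidelity of the two pure states. -/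
open scoped InnerProductSpace

/-!
The average state `ρ` is positive semidefinite of rank at most two and trace one, so its nonzero
spectrum is `{λ, 1 - λ}` with `λ (1 - λ) = (1 - tr ρ²) / 2 = p (1 - p) (1 - B²)`, and `χ = h(λ)`
for the binary entropy `h` in bits. It remains to show `h(x) ≤ 2 √(x (1 - x))`, i.e. that the
gap `2 log 2 √(x (1 - x)) - H(x)` is nonnegative, `H` being the entropy in nats. The gap
vanishes at `0` and `1/2`; on `[0, 1/2]` it is concave while `√(x (1 - x)) ≤ log 2 / 2` and convex
afterwards, where its derivative increases to `0` at `1/2`. Both pieces keep it nonnegative.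
-/

open Real Set Finset Matrix
open scoped ComplexOrder

namespace Real

noncomputable def binEntropySqrtGap (x : ℝ) : ℝ := 2 * log 2 * √(x * (1 - x)) - binEntropy x

noncomputable def binEntropySqrtGapDeriv (x : ℝ) : ℝ :=
  log 2 * (1 - 2 * x) / √(x * (1 - x)) - (log (1 - x) - log x)

lemma mul_one_sub_pos {x : ℝ} (hx : x ∈ Ioo (0 : ℝ) 1) : 0 < x * (1 - x) :=
  mul_pos hx.1 (sub_pos.2 hx.2)

lemma hasDerivAt_sqrt_mul_one_sub {x : ℝ} (hx : x ∈ Ioo (0 : ℝ) 1) :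
    HasDerivAt (fun y ↦ √(y * (1 - y))) ((1 - 2 * x) / (2 * √(x * (1 - x)))) x := by
  have hq : HasDerivAt (fun y : ℝ ↦ y * (1 - y)) (1 - 2 * x) x :=
    ((hasDerivAt_id' x).mul ((hasDerivAt_const x 1).sub (hasDerivAt_id' x))).congr_deriv
      (by simp only [Pi.sub_apply]; ring)
  exact hq.sqrt (mul_one_sub_pos hx).ne'

lemma hasDerivAt_binEntropySqrtGap {x : ℝ} (hx : x ∈ Ioo (0 : ℝ) 1) :
    HasDerivAt binEntropySqrtGap (binEntropySqrtGapDeriv x) x := by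
  have hs : √(x * (1 - x)) ≠ 0 := (sqrt_pos.2 (mul_one_sub_pos hx)).ne'
  refine (((hasDerivAt_sqrt_mul_one_sub hx).const_mul (2 * log 2)).sub
    (hasDerivAt_binEntropy hx.1.ne' hx.2.ne)).congr_deriv ?_
  unfold binEntropySqrtGapDeriv
  field_simp

lemma hasDerivAt_binEntropySqrtGapDeriv {x : ℝ} (hx : x ∈ Ioo (0 : ℝ) 1) :
    HasDerivAt binEntropySqrtGapDeriv
      ((√(x * (1 - x)) - log 2 / 2) / (x * (1 - x) * √(x * (1 - x)))) x := by
  have hq := mul_one_sub_pos hx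
  have hx1 : 1 - x ≠ 0 := (sub_pos.2 hx.2).ne'
  have hs : √(x * (1 - x)) ≠ 0 := (sqrt_pos.2 hq).ne'
  have hlin : HasDerivAt (fun y : ℝ ↦ log 2 * (1 - 2 * y)) (log 2 * -2) x :=
    (((hasDerivAt_const x 1).sub ((hasDerivAt_id' x).const_mul 2)).const_mul
      (log 2)).congr_deriv (by ring)
  have hlog1 : HasDerivAt (fun y : ℝ ↦ log (1 - y)) (-1 / (1 - x)) x :=
    (((hasDerivAt_const x 1).sub (hasDerivAt_id' x)).log hx1).congr_deriv
      (by simp only [Pi.sub_apply]; ring)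
  refine ((hlin.div (hasDerivAt_sqrt_mul_one_sub hx) hs).sub
    (hlog1.sub (hasDerivAt_log hx.1.ne'))).congr_deriv ?_
  have hsq : √(x * (1 - x)) ^ 2 = x * (1 - x) := sq_sqrt hq.le
  have hx0 : x ≠ 0 := hx.1.ne'
  field_simp
  -- `(1 - 2x)² = 1 - 4 x (1 - x)` collapses the numerator
  linear_combination (log 2 - 4 * log 2 * (x * (1 - x))) * hsq

lemma continuous_binEntropySqrtGap : Continuous binEntropySqrtGap :=
  ((continuous_const.mul (by fun_prop)).sub binEntropy_continuous)

lemma binEntropySqrtGap_zero : binEntropySqrtGap 0 = 0 := by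
  simp [binEntropySqrtGap]

lemma binEntropySqrtGap_half : binEntropySqrtGap 2⁻¹ = 0 := by
  rw [binEntropySqrtGap, binEntropy_two_inv, show (2⁻¹ : ℝ) * (1 - 2⁻¹) = 2⁻¹ ^ 2 by norm_num,
    sqrt_sq (by norm_num)]
  ring

lemma binEntropySqrtGapDeriv_half : binEntropySqrtGapDeriv 2⁻¹ = 0 := by
  norm_num [binEntropySqrtGapDeriv]

lemma binEntropySqrtGap_one_sub (x : ℝ) : binEntropySqrtGap (1 - x) = binEntropySqrtGap x := by
  rw [binEntropySqrtGap, binEntropySqrtGap, binEntropy_one_sub, sub_sub_cancel, mul_comm (1 - x)]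

lemma binEntropySqrtGap_nonneg_of_le {a x : ℝ} (ha : 0 < a) (haq : (log 2 / 2) ^ 2 ≤ a * (1 - a))
    (hax : a ≤ x) (hx : x ≤ 2⁻¹) : 0 ≤ binEntropySqrtGap x := by
  have hD : ∀ y ∈ Icc a 2⁻¹, y ∈ Ioo (0 : ℝ) 1 := fun y hy ↦
    ⟨ha.trans_le hy.1, hy.2.trans_lt (by norm_num)⟩
  have hmono : MonotoneOn binEntropySqrtGapDeriv (Icc a 2⁻¹) := by
    refine monotoneOn_of_hasDerivWithinAt_nonneg (convex_Icc _ _)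
      (fun y hy ↦ (hasDerivAt_binEntropySqrtGapDeriv (hD y hy)).continuousAt.continuousWithinAt)
      (fun y hy ↦ (hasDerivAt_binEntropySqrtGapDeriv
        (hD y (interior_subset hy))).hasDerivWithinAt) fun y hy ↦ ?_
    rw [interior_Icc] at hy
    have hsq : log 2 / 2 ≤ √(y * (1 - y)) :=
      le_sqrt_of_sq_le (haq.trans (by nlinarith [hy.1, hy.2]))
    exact div_nonneg (by linarith)
      (mul_nonneg (mul_one_sub_pos (hD y (Ioo_subset_Icc_self hy))).le (sqrt_nonneg _))
  have hanti : AntitoneOn binEntropySqrtGap (Icc a 2⁻¹) := by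
    refine antitoneOn_of_hasDerivWithinAt_nonpos (convex_Icc _ _)
      continuous_binEntropySqrtGap.continuousOn
      (fun y hy ↦ (hasDerivAt_binEntropySqrtGap (hD y (interior_subset hy))).hasDerivWithinAt)
      fun y hy ↦ ?_
    have hy := interior_subset hy
    simpa [binEntropySqrtGapDeriv_half] using
      hmono hy (right_mem_Icc.2 (hax.trans hx)) hy.2
  simpa [binEntropySqrtGap_half] using hanti ⟨hax, hx⟩ (right_mem_Icc.2 (hax.trans hx)) hx

lemma concaveOn_binEntropySqrtGap {a : ℝ} (ha : a ≤ 2⁻¹) (haq : a * (1 - a) ≤ (log 2 / 2) ^ 2) :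
    ConcaveOn ℝ (Icc 0 a) binEntropySqrtGap := by
  have hD : ∀ y ∈ interior (Icc 0 a), y ∈ Ioo (0 : ℝ) 1 := fun y hy ↦ by
    rw [interior_Icc] at hy
    exact ⟨hy.1, hy.2.trans_le ha |>.trans (by norm_num)⟩
  refine concaveOn_of_hasDerivWithinAt2_nonpos (convex_Icc _ _)
    continuous_binEntropySqrtGap.continuousOn
    (fun y hy ↦ (hasDerivAt_binEntropySqrtGap (hD y hy)).hasDerivWithinAt)
    (fun y hy ↦ (hasDerivAt_binEntropySqrtGapDeriv (hD y hy)).hasDerivWithinAt) fun y hy ↦ ?_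
  have hq := mul_one_sub_pos (hD y hy)
  rw [interior_Icc] at hy
  have hsq : √(y * (1 - y)) ≤ log 2 / 2 :=
    sqrt_le_iff.2 ⟨by positivity, (by nlinarith [hy.1, hy.2] : y * (1 - y) ≤ a * (1 - a)).trans haq⟩
  exact div_nonpos_of_nonpos_of_nonneg (by linarith) (mul_nonneg hq.le (sqrt_nonneg _))

lemma binEntropySqrtGap_nonneg_of_le_half {x : ℝ} (hx0 : 0 ≤ x) (hx : x ≤ 2⁻¹) :
    0 ≤ binEntropySqrtGap x := by
  -- `a` is where the second derivative of the gap changes sign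
  obtain ⟨a, ha0, ha, haq⟩ : ∃ a : ℝ, 0 < a ∧ a ≤ 2⁻¹ ∧ a * (1 - a) = (log 2 / 2) ^ 2 := by
    have hlog2 : 0 < log 2 ∧ log 2 < 1 := ⟨log_pos one_lt_two, by linarith [log_two_lt_d9]⟩
    have hc : √(1 - log 2 ^ 2) ^ 2 = 1 - log 2 ^ 2 := sq_sqrt (by nlinarith)
    have hc0 : 0 < √(1 - log 2 ^ 2) := sqrt_pos.2 (by nlinarith)
    refine ⟨(1 - √(1 - log 2 ^ 2)) / 2, by nlinarith, by linarith, ?_⟩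
    linear_combination (-1 / 4 : ℝ) * hc
  rcases le_total a x with hax | hxa
  · exact binEntropySqrtGap_nonneg_of_le ha0 haq.ge hax hx
  · have := (concaveOn_binEntropySqrtGap ha haq.le).min_le_of_mem_Icc
      (left_mem_Icc.2 ha0.le) (right_mem_Icc.2 ha0.le) ⟨hx0, hxa⟩
    rw [binEntropySqrtGap_zero] at this
    exact (le_min le_rfl (binEntropySqrtGap_nonneg_of_le ha0 haq.ge le_rfl ha)).trans this

theorem binEntropy_le_two_mul_log_two_mul_sqrt {x : ℝ} (hx0 : 0 ≤ x) (hx1 : x ≤ 1) :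
    binEntropy x ≤ 2 * log 2 * √(x * (1 - x)) := by
  suffices 0 ≤ binEntropySqrtGap x by rw [binEntropySqrtGap] at this; linarith
  rcases le_total x 2⁻¹ with hx | hx
  · exact binEntropySqrtGap_nonneg_of_le_half hx0 hx
  · rw [← binEntropySqrtGap_one_sub]
    exact binEntropySqrtGap_nonneg_of_le_half (by linarith) (by linarith)

theorem sum_negMulLog_le_of_card_ne_zero_le_two {ι : Type*} [Fintype ι] {v : ι → ℝ}
    (hv : ∀ i, 0 ≤ v i) (hsum : ∑ i, v i = 1) (hcard : Fintype.card {i // v i ≠ 0} ≤ 2) :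
    ∑ i, negMulLog (v i) ≤ 2 * log 2 * √((1 - ∑ i, v i ^ 2) / 2) := by
  classical
  rw [Fintype.card_subtype] at hcard
  set s := univ.filter (v · ≠ 0)
  have hsupp : ∀ f : ℝ → ℝ, f 0 = 0 → ∑ i ∈ s, f (v i) = ∑ i, f (v i) := fun f hf ↦
    sum_filter_of_ne fun i _ hfi hvi ↦ hfi (by rw [hvi, hf])
  have hs1 : ∑ i ∈ s, v i = 1 := (hsupp id rfl).trans hsum
  rw [← hsupp negMulLog negMulLog_zero, ← hsupp (· ^ 2) (zero_pow two_ne_zero)]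
  rcases (show #s ≤ 1 ∨ #s = 2 by omega) with hle | htwo
  · have hv1 : ∀ i ∈ s, v i = 1 := fun i hi ↦ by
      rwa [sum_eq_single_of_mem i hi fun j hj hji ↦ absurd (card_le_one.1 hle j hj i hi) hji]
        at hs1
    rw [sum_congr rfl fun i hi ↦ by rw [hv1 i hi, negMulLog_one], sum_const_zero]
    positivity
  · obtain ⟨i, j, hij, hsij⟩ := card_eq_two.1 htwo
    rw [hsij, sum_pair hij] at hs1 ⊢
    rw [sum_pair hij, show v j = 1 - v i by linarith,
      ← binEntropy_eq_negMulLog_add_negMulLog_one_sub]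
    convert binEntropy_le_two_mul_log_two_mul_sqrt (hv i) (by linarith [hv j]) using 4
    ring

theorem sum_neg_mul_logb_two_le_of_card_ne_zero_le_two {ι : Type*} [Fintype ι] {v : ι → ℝ}
    (hv : ∀ i, 0 ≤ v i) (hsum : ∑ i, v i = 1) (hcard : Fintype.card {i // v i ≠ 0} ≤ 2) :
    ∑ i, -(v i * logb 2 (v i)) ≤ 2 * √((1 - ∑ i, v i ^ 2) / 2) := by
  have hlog2 : 0 < log 2 := log_pos one_lt_two
  have hbits : ∑ i, -(v i * logb 2 (v i)) = (∑ i, negMulLog (v i)) / log 2 := by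
    rw [sum_div]
    exact sum_congr rfl fun i _ ↦ by rw [negMulLog, logb]; ring
  rw [hbits, div_le_iff₀ hlog2]
  linarith [sum_negMulLog_le_of_card_ne_zero_le_two hv hsum hcard]

end Real

namespace Matrix

lemma IsHermitian.trace_pow_eq_sum_eigenvalues_pow {n 𝕜 : Type*} [Fintype n] [DecidableEq n]
    [RCLike 𝕜] {A : Matrix n n 𝕜} (hA : A.IsHermitian) (k : ℕ) :
    (A ^ k).trace = ∑ i, (hA.eigenvalues i : 𝕜) ^ k := by
  conv_lhs => rw [hA.spectral_theorem]
  rw [← map_pow, Unitary.conjStarAlgAut_apply, trace_mul_cycle, Unitary.coe_star_mul_self, one_mul,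
    diagonal_pow, trace_diagonal]
  rfl

lemma rank_vecMulVec_add_vecMulVec_le {m n R : Type*} [Fintype m] [Fintype n] [CommRing R]
    [StrongRankCondition R] (a c : m → R) (b e : n → R) :
    (vecMulVec a b + vecMulVec c e).rank ≤ 2 := by
  have : vecMulVec a b + vecMulVec c e = of (fun i k ↦ ![a i, c i] k) * of ![b, e] := by
    ext i j
    simp [mul_apply, Fin.sum_univ_two, vecMulVec_apply]
  rw [this]
  exact (rank_mul_le_left _ _).trans ((rank_le_card_width _).trans (by simp))

section PureStates

variable {ι 𝕜 : Type*} [Fintype ι] [RCLike 𝕜]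

lemma trace_vecMulVec_star (u v : EuclideanSpace 𝕜 ι) :
    (vecMulVec u (star v)).trace = ⟪v, u⟫_𝕜 :=
  trace_vecMulVec _ _

lemma trace_vecMulVec_star_mul_vecMulVec_star (u v : EuclideanSpace 𝕜 ι) :
    (vecMulVec u (star u) * vecMulVec v (star v)).trace = ⟪u, v⟫_𝕜 * ⟪v, u⟫_𝕜 := by
  rw [vecMulVec_mul_vecMulVec, trace_vecMulVec, dotProduct_smul, smul_eq_mul,
    EuclideanSpace.inner_eq_star_dotProduct, EuclideanSpace.inner_eq_star_dotProduct,
    dotProduct_comm (star _)]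

variable {u v : EuclideanSpace 𝕜 ι}

lemma trace_smul_vecMulVec_star_add (hu : ‖u‖ = 1) (hv : ‖v‖ = 1) (a b : 𝕜) :
    (a • vecMulVec u (star u) + b • vecMulVec v (star v)).trace = a + b := by
  rw [trace_add, trace_smul, trace_smul, trace_vecMulVec_star, trace_vecMulVec_star,
    inner_self_eq_norm_sq_to_K, inner_self_eq_norm_sq_to_K, hu, hv]
  simp

lemma trace_sq_smul_vecMulVec_star_add [DecidableEq ι] (hu : ‖u‖ = 1) (hv : ‖v‖ = 1) (a b : 𝕜) :
    ((a • vecMulVec u (star u) + b • vecMulVec v (star v)) ^ 2).trace =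
      a ^ 2 + b ^ 2 + 2 * a * b * (‖⟪u, v⟫_𝕜‖ ^ 2 : ℝ) := by
  have hvu : ⟪v, u⟫_𝕜 = starRingEnd 𝕜 ⟪u, v⟫_𝕜 := (inner_conj_symm v u).symm
  rw [sq, add_mul, mul_add, mul_add]
  simp only [smul_mul_smul_comm, trace_add, trace_smul, smul_eq_mul,
    trace_vecMulVec_star_mul_vecMulVec_star, inner_self_eq_norm_sq_to_K, hu, hv, hvu,
    RCLike.mul_conj, RCLike.conj_mul]
  push_cast
  ring

lemma posSemidef_smul_vecMulVec_star_add {a b : ℝ} (ha : 0 ≤ a) (hb : 0 ≤ b) :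
    ((a : 𝕜) • vecMulVec u (star u) + (b : 𝕜) • vecMulVec v (star v)).PosSemidef :=
  ((posSemidef_vecMulVec_self_star _).smul (RCLike.ofReal_nonneg.2 ha)).add
    ((posSemidef_vecMulVec_self_star _).smul (RCLike.ofReal_nonneg.2 hb))

end PureStates
end Matrix

theorem holevo_chi_pure_binary_le
    {d : ℕ} (φ0 φ1 : EuclideanSpace ℂ (Fin d)) (h0 : ‖φ0‖ = 1) (h1 : ‖φ1‖ = 1)
    (p : ℝ) (hp : p ∈ Set.Icc (0:ℝ) 1)
    (ρ : Matrix (Fin d) (Fin d) ℂ)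
    (hρ : ρ = (p : ℂ) • Matrix.of (fun i j => φ0 i * (starRingEnd ℂ) (φ0 j)) +
              ((1 - p : ℝ) : ℂ) • Matrix.of (fun i j => φ1 i * (starRingEnd ℂ) (φ1 j)))
    (hherm : ρ.IsHermitian) :
    (∑ i, -(hherm.eigenvalues i * Real.logb 2 (hherm.eigenvalues i))) ≤
      2 * Real.sqrt (p * (1-p) * (1 - ‖⟪φ0, φ1⟫_ℂ‖ ^ 2)) := by
  have hρ' : ρ = (p : ℂ) • vecMulVec φ0 (star φ0) + ((1 - p : ℝ) : ℂ) • vecMulVec φ1 (star φ1) :=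
    hρ
  have hpsd : ρ.PosSemidef := hρ' ▸ posSemidef_smul_vecMulVec_star_add hp.1 (sub_nonneg.2 hp.2)
  have hcard : Fintype.card {i // hherm.eigenvalues i ≠ 0} ≤ 2 := by
    rw [← hherm.rank_eq_card_non_zero_eigs, hρ', ← smul_vecMulVec, ← smul_vecMulVec]
    exact rank_vecMulVec_add_vecMulVec_le _ _ _ _
  have htrace : ∑ i, hherm.eigenvalues i = 1 := by
    have h := trace_smul_vecMulVec_star_add h0 h1 (p : ℂ) ((1 - p : ℝ) : ℂ)
    rw [← hρ', hherm.trace_eq_sum_eigenvalues] at h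
    apply Complex.ofReal_injective
    push_cast at h ⊢
    linear_combination h
  have hpurity : ∑ i, hherm.eigenvalues i ^ 2 =
      p ^ 2 + (1 - p) ^ 2 + 2 * p * (1 - p) * ‖⟪φ0, φ1⟫_ℂ‖ ^ 2 := by
    have h := trace_sq_smul_vecMulVec_star_add h0 h1 (p : ℂ) ((1 - p : ℝ) : ℂ)
    rw [← hρ', hherm.trace_pow_eq_sum_eigenvalues_pow] at h
    apply Complex.ofReal_injective
    push_cast at h ⊢
    linear_combination h
  calc _ ≤ 2 * √((1 - ∑ i, hherm.eigenvalues i ^ 2) / 2) :=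
        sum_neg_mul_logb_two_le_of_card_ne_zero_le_two hpsd.eigenvalues_nonneg htrace hcard
    _ = _ := by rw [hpurity]; ring_nf
end

section
/- For vectors a, b in ℝⁿ with nonnegative entries satisfying Σ aᵢ = Σ bᵢ = 1 (viewed as spectra of commuting density matrices), and p ∈ [0,1]: p·Σᵢ√(aᵢ·cᵢ) + (1-p)·Σᵢ√(bᵢ·cᵢ) ≤ √(p² + (1-p)² + 2p(1-p)·Σᵢ√(aᵢbᵢ)), where cᵢ = p·aᵢ + (1-p)·bᵢ. -/
theorem classical_fidelity_avg_bound {n : ℕ} (a b : Fin n → ℝ)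
    (ha : ∀ i, 0 ≤ a i) (hb : ∀ i, 0 ≤ b i)
    (hsa : ∑ i, a i = 1) (hsb : ∑ i, b i = 1)
    (p : ℝ) (hp : p ∈ Set.Icc (0:ℝ) 1) :
    p * ∑ i, Real.sqrt (a i * (p * a i + (1-p) * b i)) +
        (1-p) * ∑ i, Real.sqrt (b i * (p * a i + (1-p) * b i)) ≤
      Real.sqrt (p^2 + (1-p)^2 + 2*p*(1-p) * ∑ i, Real.sqrt (a i * b i)) := by
  obtain ⟨hp0, hp1⟩ := hp
  have hq0 : (0:ℝ) ≤ 1 - p := by linarith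
  set c : Fin n → ℝ := fun i => p * a i + (1-p) * b i with hc
  have hcnn : ∀ i, 0 ≤ c i := fun i => add_nonneg (mul_nonneg hp0 (ha i)) (mul_nonneg hq0 (hb i))
  set f : Fin n → ℝ := fun i => p * Real.sqrt (a i) + (1-p) * Real.sqrt (b i) with hf
  have hstep : p * ∑ i, Real.sqrt (a i * c i) + (1-p) * ∑ i, Real.sqrt (b i * c i)
      = ∑ i, f i * Real.sqrt (c i) := by
    rw [Finset.mul_sum, Finset.mul_sum, ← Finset.sum_add_distrib]
    refine Finset.sum_congr rfl fun i _ => ?_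
    rw [Real.sqrt_mul (ha i), Real.sqrt_mul (hb i)]
    ring
  rw [hstep]
  have hcs := Real.sum_mul_le_sqrt_mul_sqrt Finset.univ f (fun i => Real.sqrt (c i))
  refine hcs.trans ?_
  have h1 : ∑ i, Real.sqrt (c i) ^ 2 = 1 := by
    have : ∀ i, Real.sqrt (c i) ^ 2 = c i := fun i => Real.sq_sqrt (hcnn i)
    simp_rw [this, hc, Finset.sum_add_distrib, ← Finset.mul_sum, hsa, hsb]
    ring
  have h2 : ∑ i, f i ^ 2 = p^2 + (1-p)^2 + 2*p*(1-p) * ∑ i, Real.sqrt (a i * b i) := by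
    have : ∀ i, f i ^ 2 = p^2 * a i + (1-p)^2 * b i
        + 2*p*(1-p) * Real.sqrt (a i * b i) := by
      intro i
      have h3 := Real.sq_sqrt (ha i)
      have h4 := Real.sq_sqrt (hb i)
      have h5 : Real.sqrt (a i) * Real.sqrt (b i) = Real.sqrt (a i * b i) :=
        (Real.sqrt_mul (ha i) _).symm
      simp only [hf]
      linear_combination p^2*h3 + (1-p)^2*h4 + 2*p*(1-p)*h5
    simp_rw [this, Finset.sum_add_distrib, ← Finset.mul_sum, hsa, hsb]
    ring_nf
  rw [h1, h2, Real.sqrt_one, mul_one]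
end
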